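/- The two-qudit isotropic state σ = p φ⁺ + (1−p) 𝟙/d² is separable for 0 ≤ p ≤ 1/(1+d). (Equivalently: for p in this range, σ admits a decomposition as a convex combination of product states.) -/

import Mathlib

open Matrix BigOperators ComplexOrder Kronecker

noncomputable section

def outer {n : Type*} (v : n → ℂ) : Matrix n n ℂ := fun i j => v i * star (v j)

def IsDensity {n : Type*} [Fintype n] [DecidableEq n] (ρ : Matrix n n ℂ) : Prop :=
  ρ.PosSemidef ∧ ρ.trace = 1

def maxEntVec (d : ℕ) : Fin d × Fin d → ℂ :=
  fun x => if x.1 = x.2 then ((1 / Real.sqrt d : ℝ) : ℂ) else 0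

def isoState (d : ℕ) (p : ℝ) : Matrix (Fin d × Fin d) (Fin d × Fin d) ℂ :=
  p • outer (maxEntVec d) + ((1 - p) / (d ^ 2 : ℝ)) • (1 : Matrix (Fin d × Fin d) (Fin d × Fin d) ℂ)

/-- Bipartite separability on `ℂ^d ⊗ ℂ^d`. -/
def SepDD {d : ℕ} (τ : Matrix (Fin d × Fin d) (Fin d × Fin d) ℂ) : Prop :=
  ∃ (k : ℕ) (t : Fin k → ℝ) (ρ1 ρ2 : Fin k → Matrix (Fin d) (Fin d) ℂ),
    (∀ b, 0 ≤ t b) ∧ (∑ b, t b = 1) ∧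
    (∀ b, IsDensity (ρ1 b) ∧ IsDensity (ρ2 b)) ∧
    τ = ∑ b, t b • (ρ1 b ⊗ₖ ρ2 b)

/-!
For `m : Fin d → ZMod N` with `N ≥ 3`, let `ψ_m = d^{-1/2} (ω^{m a})_a`. Averaging the product
states `|ψ_m⟩⟨ψ_m| ⊗ |ψ̄_m⟩⟨ψ̄_m|` over all `m` leaves only the entries whose phase
`m a + m e - m b - m c` cancels identically, which gives `(𝟙 + d φ⁺ - D) / d²` with
`D = ∑ x, |xx⟩⟨xx|`. Mixing in the separable state `D / d` to cancel `-D` produces the isotropic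
state at `p = 1 / (1 + d)`, and every isotropic state with smaller `p` is a mixture of that one
with the separable state `𝟙 / d²`.
-/

open Finset

theorem AddChar.map_sum_eq_prod {A M ι : Type*} [AddCommMonoid A] [CommMonoid M]
    (ψ : AddChar A M) (s : Finset ι) (f : ι → A) :
    ψ (∑ i ∈ s, f i) = ∏ i ∈ s, ψ (f i) := by
  classical
  induction s using Finset.induction_on with
  | empty => simp
  | insert i s hi ih => rw [sum_insert hi, prod_insert hi, AddChar.map_add_eq_mul, ih]

theorem AddChar.sum_apply_dotProduct {R R' ι : Type*} [CommRing R] [Fintype R] [DecidableEq R]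
    [CommRing R'] [IsDomain R'] [Fintype ι] [DecidableEq ι] {ψ : AddChar R R'}
    (hψ : ψ.IsPrimitive) (f : ι → R) :
    ∑ m : ι → R, ψ (f ⬝ᵥ m) = if f = 0 then (Fintype.card R : R') ^ Fintype.card ι else 0 := by
  simp_rw [dotProduct, AddChar.map_sum_eq_prod]
  rw [← Fintype.prod_sum (fun j x => ψ (f j * x))]
  simp_rw [mul_comm (f _), AddChar.sum_mulShift _ hψ, Nat.cast_ite, Nat.cast_zero,
    prod_ite_zero, prod_const, card_univ]
  simp only [funext_iff, Pi.zero_apply, mem_univ, forall_const]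

theorem isDensity_outer {n : Type*} [Fintype n] [DecidableEq n] {v : n → ℂ}
    (hv : v ⬝ᵥ star v = 1) : IsDensity (outer v) :=
  ⟨posSemidef_vecMulVec_self_star v, (trace_vecMulVec v (star v)).trans hv⟩

theorem isDensity_single {n : Type*} [Fintype n] [DecidableEq n] (i : n) :
    IsDensity (single i i (1 : ℂ)) :=
  ⟨diagonal_single i (1 : ℂ) ▸ PosSemidef.diagonal (Pi.single_nonneg.2 zero_le_one),
    trace_single_eq_same i 1⟩

def productStates (m n : Type*) [Fintype m] [DecidableEq m] [Fintype n] [DecidableEq n] :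
    Set (Matrix (m × n) (m × n) ℂ) :=
  {τ | ∃ ρ₁ ρ₂, IsDensity ρ₁ ∧ IsDensity ρ₂ ∧ ρ₁ ⊗ₖ ρ₂ = τ}

theorem sepDD_of_mem_convexHull {d : ℕ} {τ : Matrix (Fin d × Fin d) (Fin d × Fin d) ℂ}
    (hτ : τ ∈ convexHull ℝ (productStates (Fin d) (Fin d))) : SepDD τ := by
  obtain ⟨ι, _, w, z, hw, hw1, hz, rfl⟩ := mem_convexHull_iff_exists_fintype.1 hτ
  choose ρ₁ ρ₂ hρ₁ hρ₂ hρ using hz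
  let e := (Fintype.equivFin ι).symm
  refine ⟨Fintype.card ι, w ∘ e, ρ₁ ∘ e, ρ₂ ∘ e, fun _ => hw _, ?_,
    fun _ => ⟨hρ₁ _, hρ₂ _⟩, ?_⟩
  · exact (e.sum_comp w).trans hw1
  · simp only [Function.comp_apply, hρ]
    exact (e.sum_comp fun i => w i • z i).symm

theorem inv_card_smul_sum_mem_convexHull {ι E : Type*} [Fintype ι] [Nonempty ι]
    [AddCommGroup E] [Module ℝ E] {s : Set E} {z : ι → E} (hz : ∀ i, z i ∈ s) :
    (Fintype.card ι : ℝ)⁻¹ • ∑ i, z i ∈ convexHull ℝ s := by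
  rw [smul_sum]
  refine (convex_convexHull ℝ s).sum_mem (fun _ _ => by positivity) ?_
    fun i _ => subset_convexHull ℝ s (hz i)
  rw [sum_const, card_univ, nsmul_eq_mul]
  exact mul_inv_cancel₀ (Nat.cast_ne_zero.2 Fintype.card_ne_zero)

theorem ofReal_one_div_sqrt_mul_self (d : ℕ) :
    ((1 / Real.sqrt d : ℝ) : ℂ) * ((1 / Real.sqrt d : ℝ) : ℂ) = (d : ℂ)⁻¹ := by
  rw [← Complex.ofReal_mul, div_mul_div_comm, one_mul, Real.mul_self_sqrt d.cast_nonneg]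
  push_cast
  rw [one_div]

theorem stdAddChar_mul_conj {N : ℕ} [NeZero N] (x : ZMod N) :
    (ZMod.stdAddChar x : ℂ) * starRingEnd ℂ (ZMod.stdAddChar x) = 1 := by
  rw [← AddChar.map_neg_eq_conj, ← AddChar.map_add_eq_mul, add_neg_cancel,
    AddChar.map_zero_eq_one]

def phaseVec (N d : ℕ) [NeZero N] (m : Fin d → ZMod N) : Fin d → ℂ :=
  fun a => ((1 / Real.sqrt d : ℝ) : ℂ) * ZMod.stdAddChar (m a)

theorem phaseVec_dotProduct_star {N d : ℕ} [NeZero N] (hd : 0 < d) (m : Fin d → ZMod N) :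
    phaseVec N d m ⬝ᵥ star (phaseVec N d m) = 1 := by
  have hterm : ∀ a, phaseVec N d m a * star (phaseVec N d m a) = (d : ℂ)⁻¹ := fun a => by
    rw [phaseVec, star_mul', mul_mul_mul_comm, Complex.star_def, Complex.conj_ofReal,
      ofReal_one_div_sqrt_mul_self, stdAddChar_mul_conj, mul_one]
  simp only [dotProduct, Pi.star_apply, hterm, sum_const, card_univ, Fintype.card_fin,
    nsmul_eq_mul]
  exact mul_inv_cancel₀ (Nat.cast_ne_zero.2 hd.ne')

theorem sum_outer_phaseVec_kronecker_apply {N d : ℕ} [NeZero N] (hN : 2 < N)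
    (a b c e : Fin d) :
    (∑ m, outer (phaseVec N d m) ⊗ₖ outer (star (phaseVec N d m))) (a, b) (c, e) =
      (N ^ d / d ^ 2 : ℂ) * if (a = c ∧ b = e) ∨ (a = b ∧ c = e) then 1 else 0 := by
  have hentry : ∀ m : Fin d → ZMod N,
      (outer (phaseVec N d m) ⊗ₖ outer (star (phaseVec N d m))) (a, b) (c, e) =
        ((d : ℂ) ^ 2)⁻¹ * ZMod.stdAddChar
          ((Pi.single a 1 + Pi.single e 1 - (Pi.single b 1 + Pi.single c 1)) ⬝ᵥ m) := by
    intro m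
    have harg : (Pi.single a 1 + Pi.single e 1 - (Pi.single b 1 + Pi.single c 1)) ⬝ᵥ m =
        m a + -m c + (-m b + m e) := by
      simp only [sub_dotProduct, add_dotProduct, single_dotProduct, one_mul]
      ring
    rw [harg, AddChar.map_add_eq_mul, AddChar.map_add_eq_mul, AddChar.map_add_eq_mul,
      sq, mul_inv, ← ofReal_one_div_sqrt_mul_self]
    simp only [kroneckerMap_apply, outer, Pi.star_apply, phaseVec, star_mul',
      Complex.star_def, Complex.conj_ofReal, Complex.conj_conj, AddChar.map_neg_eq_conj]
    ring
  have h1 : (1 : ZMod N) ≠ 0 := by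
    have : Fact (1 < N) := ⟨by omega⟩
    exact one_ne_zero
  -- For `a = e ≠ b = c` the phase is `2 (m a - m b)`, which would cancel identically if `N = 2`.
  have h2 : (1 + 1 : ZMod N) ≠ 0 := by
    rw [one_add_one_eq_two, ← Nat.cast_ofNat, Ne, ZMod.natCast_eq_zero_iff]
    exact Nat.not_dvd_of_pos_of_lt two_pos hN
  have hcond : (a = b ∧ e = c) ∨ (a = c ∧ e = b) ↔ (a = c ∧ b = e) ∨ (a = b ∧ c = e) := by
    constructor <;> rintro (⟨rfl, rfl⟩ | ⟨rfl, rfl⟩) <;> simp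
  rw [Matrix.sum_apply, sum_congr rfl fun m _ => hentry m, ← mul_sum,
    AddChar.sum_apply_dotProduct (ZMod.isPrimitive_stdAddChar N)]
  simp only [sub_eq_zero, Pi.single_add_single_eq_single_add_single h1 h1, ZMod.card,
    Fintype.card_fin, h2, false_and, or_false, true_and, hcond]
  split_ifs <;> ring

theorem sum_single_kronecker_single_apply {n : Type*} [Fintype n] [DecidableEq n]
    (a b c e : n) :
    (∑ x, single x x (1 : ℂ) ⊗ₖ single x x 1) (a, b) (c, e) =
      if (a = c ∧ b = e) ∧ (a = b ∧ c = e) then 1 else 0 := by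
  simp only [Matrix.sum_apply, single_kronecker_single, single_apply, Prod.mk.injEq, mul_one]
  by_cases h : (a = c ∧ b = e) ∧ (a = b ∧ c = e)
  · obtain ⟨⟨rfl, rfl⟩, rfl, -⟩ := h
    simp
  · rw [if_neg h]
    refine sum_eq_zero fun x _ => if_neg ?_
    rintro ⟨⟨rfl, rfl⟩, rfl, rfl⟩
    exact h ⟨⟨rfl, rfl⟩, rfl, rfl⟩

theorem one_eq_sum_single_kronecker_single {m n : Type*} [Fintype m] [DecidableEq m]
    [Fintype n] [DecidableEq n] :
    (1 : Matrix (m × n) (m × n) ℂ) = ∑ x : m × n, single x.1 x.1 1 ⊗ₖ single x.2 x.2 1 := by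
  simp only [single_kronecker_single, mul_one, Prod.mk.eta, sum_single_one]

theorem outer_maxEntVec_apply (d : ℕ) (a b c e : Fin d) :
    outer (maxEntVec d) (a, b) (c, e) = if a = b ∧ c = e then (d : ℂ)⁻¹ else 0 := by
  simp only [outer, maxEntVec, ite_mul, zero_mul, mul_ite, apply_ite star, star_zero, mul_zero,
    Complex.star_def, Complex.conj_ofReal, ofReal_one_div_sqrt_mul_self, ite_and]
  split_ifs <;> rfl

theorem isoState_smul_add_smul (d : ℕ) {s t : ℝ} (hst : s + t = 1) (p q : ℝ) :
    isoState d (s * p + t * q) = s • isoState d p + t • isoState d q := by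
  obtain rfl : t = 1 - s := by linarith
  simp only [isoState]
  module

theorem isoState_zero_mem_convexHull {d : ℕ} (hd : 0 < d) :
    isoState d 0 ∈ convexHull ℝ (productStates (Fin d) (Fin d)) := by
  have : Nonempty (Fin d) := ⟨⟨0, hd⟩⟩
  have h := inv_card_smul_sum_mem_convexHull (s := productStates (Fin d) (Fin d))
    fun x : Fin d × Fin d => ⟨_, _, isDensity_single x.1, isDensity_single x.2, rfl⟩
  rw [← one_eq_sum_single_kronecker_single] at h
  convert h using 1
  simp [isoState, sq]

theorem isoState_one_div_one_add {N d : ℕ} [NeZero N] (hN : 2 < N) :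
    isoState d (1 / (1 + d)) =
      (d / (1 + d) : ℝ) • ((N ^ d : ℝ)⁻¹ •
          ∑ m, outer (phaseVec N d m) ⊗ₖ outer (star (phaseVec N d m))) +
        (1 / (1 + d) : ℝ) • ((d : ℝ)⁻¹ • ∑ x, single x x (1 : ℂ) ⊗ₖ single x x 1) := by
  ext ⟨a, b⟩ ⟨c, e⟩
  have hd : (d : ℂ) ≠ 0 := Nat.cast_ne_zero.2 a.pos.ne'
  simp only [isoState, Matrix.add_apply, Matrix.smul_apply, one_apply, Prod.mk.injEq,
    outer_maxEntVec_apply, sum_outer_phaseVec_kronecker_apply hN,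
    sum_single_kronecker_single_apply, Complex.real_smul]
  have hNd : (N : ℂ) ^ d ≠ 0 := pow_ne_zero _ (Nat.cast_ne_zero.2 (NeZero.ne N))
  have hd1 : (1 + d : ℂ) ≠ 0 := by norm_cast; omega
  push_cast
  split_ifs <;> first | (exfalso; tauto) | (field_simp; ring)

theorem isoState_one_div_one_add_mem_convexHull {N d : ℕ} [NeZero N] (hN : 2 < N)
    (hd : 0 < d) : isoState d (1 / (1 + d)) ∈ convexHull ℝ (productStates (Fin d) (Fin d)) := by
  have : Nonempty (Fin d) := ⟨⟨0, hd⟩⟩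
  have hphase := inv_card_smul_sum_mem_convexHull (s := productStates (Fin d) (Fin d))
    fun m : Fin d → ZMod N => ⟨_, _, isDensity_outer (phaseVec_dotProduct_star hd m),
      isDensity_outer (by rw [star_star, dotProduct_comm]; exact phaseVec_dotProduct_star hd m),
      rfl⟩
  have hdiag := inv_card_smul_sum_mem_convexHull (s := productStates (Fin d) (Fin d))
    fun x : Fin d => ⟨_, _, isDensity_single x, isDensity_single x, rfl⟩
  simp only [Fintype.card_fun, ZMod.card, Fintype.card_fin, Nat.cast_pow] at hphase hdiag
  rw [isoState_one_div_one_add hN]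
  exact convex_convexHull ℝ _ hphase hdiag (by positivity) (by positivity) (by field_simp; ring)

/-- the two-qudit isotropic state is separable for `0 ≤ p ≤ 1/(1+d)`. -/
theorem isotropic_separable {d : ℕ} (hd : 2 ≤ d)
    (p : ℝ) (hp0 : 0 ≤ p) (hp1 : p ≤ 1 / (1 + d)) :
    SepDD (isoState d p) := by
  have hd0 : 0 < d := by omega
  have hd1 : (0 : ℝ) < 1 + d := by positivity
  have hp : isoState d p =
      (p * (1 + d)) • isoState d (1 / (1 + d)) + (1 - p * (1 + d)) • isoState d 0 := by
    rw [← isoState_smul_add_smul d (add_sub_cancel _ 1), mul_zero, add_zero]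
    field_simp
  apply sepDD_of_mem_convexHull
  rw [hp]
  exact convex_convexHull ℝ _ (isoState_one_div_one_add_mem_convexHull (N := 3) (by norm_num) hd0)
    (isoState_zero_mem_convexHull hd0) (by positivity) (by linarith [(le_div_iff₀ hd1).1 hp1])
    (add_sub_cancel _ 1)
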